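/- Let f be a bounded measurable real-valued function on [0, T] with ∫₀^T f(x) dx = A > 0. Then for any ρ ∈ [0, 1/2), the set { ξ ∈ [0,T] : f(ξ) ≥ ρ·A/T and ∫₀^ξ f(x) dx ≥ ρ·A } has positive Lebesgue measure. -/

import Mathlib

open Set MeasureTheory

/-- Let `f` be a bounded measurable function on `[0,T]` with
`∫₀^T f = A > 0`. Then for any `ρ ∈ [0, 1/2)` the set
`{ξ ∈ [0,T] : f ξ ≥ ρ A/T and ∫₀^ξ f ≥ ρ A}` has positive Lebesgue measure. -/
theorem statement19 (T : ℝ) (hT : 0 < T) (f : ℝ → ℝ)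
    (hmeas : Measurable fun x : Set.Icc (0 : ℝ) T => f x)
    (hbdd : ∃ M : ℝ, ∀ x ∈ Set.Icc (0 : ℝ) T, |f x| ≤ M)
    (A : ℝ) (hA : 0 < A) (hint : ∫ x in (0 : ℝ)..T, f x = A)
    (ρ : ℝ) (hρ : ρ ∈ Set.Ico (0 : ℝ) (1 / 2)) :
    0 < volume {ξ | ξ ∈ Set.Icc (0 : ℝ) T ∧ ρ * (A / T) ≤ f ξ ∧
      ρ * A ≤ ∫ x in (0 : ℝ)..ξ, f x} := by
  obtain ⟨M, hM⟩ := hbdd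
  obtain ⟨hρ0, hρh⟩ := hρ
  have hIcc : MeasurableSet (Icc (0:ℝ) T) := measurableSet_Icc
  have hmeas' : AEStronglyMeasurable f (volume.restrict (Icc (0:ℝ) T)) := by
    rw [← map_comap_subtype_coe hIcc]
    exact ((MeasurableEmbedding.subtype_coe hIcc).aestronglyMeasurable_map_iff).2
      hmeas.aestronglyMeasurable
  have hint_f : IntegrableOn f (Icc (0:ℝ) T) := by
    refine Integrable.mono' (integrable_const M) hmeas' ?_
    filter_upwards [ae_restrict_mem hIcc] with x hx using hM x hx
  set F : ℝ → ℝ := fun ξ => ∫ x in (0:ℝ)..ξ, f x with hF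
  have hcont : ContinuousOn F (Icc (0:ℝ) T) := by
    have := intervalIntegral.continuousOn_primitive_interval
      (a := (0:ℝ)) (b := T) (μ := volume) (f := f) (by rwa [uIcc_of_le hT.le])
    rwa [uIcc_of_le hT.le] at this
  set s : Set ℝ := {t ∈ Icc (0:ℝ) T | F t ≤ ρ * A} with hs
  have h0s : (0:ℝ) ∈ s := by
    refine ⟨⟨le_refl 0, hT.le⟩, ?_⟩
    simp only [hF, intervalIntegral.integral_same]
    positivity
  have hsne : s.Nonempty := ⟨0, h0s⟩
  have hsbdd : BddAbove s := ⟨T, fun x hx => hx.1.2⟩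
  have hsclosed : IsClosed s :=
    hcont.preimage_isClosed_of_isClosed isClosed_Icc isClosed_Iic
  set t₀ : ℝ := sSup s with ht₀
  have ht₀s : t₀ ∈ s := hsclosed.csSup_mem hsne hsbdd
  have ht₀mem : t₀ ∈ Icc (0:ℝ) T := ht₀s.1
  have hρA_lt_A : ρ * A < A := by nlinarith
  have hTns : T ∉ s := by
    intro h
    have h2 : F T ≤ ρ * A := h.2
    rw [show F T = A from hint] at h2
    exact absurd h2 (not_le.2 hρA_lt_A)
  have ht₀T : t₀ < T := lt_of_le_of_ne ht₀mem.2 (fun h => hTns (h ▸ ht₀s))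
  -- F ≥ ρA on (t₀, T]
  have hgt : ∀ t ∈ Ioc t₀ T, ρ * A ≤ F t := by
    intro t ht
    by_contra h
    have hts : t ∈ s := ⟨⟨le_trans ht₀mem.1 ht.1.le, ht.2⟩, le_of_not_ge h⟩
    exact absurd (le_csSup hsbdd hts) (not_le.2 ht.1)
  have hsub : Ioc t₀ T ⊆ Icc (0:ℝ) T := fun x hx => ⟨le_trans ht₀mem.1 hx.1.le, hx.2⟩
  have hnebot : (nhdsWithin t₀ (Ioc t₀ T)).NeBot := by
    rw [← mem_closure_iff_nhdsWithin_neBot, closure_Ioc ht₀T.ne]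
    exact ⟨le_refl _, ht₀T.le⟩
  have hFt₀ : ρ * A ≤ F t₀ := by
    refine ge_of_tendsto ((hcont t₀ ht₀mem).mono_left (nhdsWithin_mono _ hsub)) ?_
    filter_upwards [self_mem_nhdsWithin] with x hx using hgt x hx
  have hge : ∀ t ∈ Icc t₀ T, ρ * A ≤ F t := by
    intro t ht
    rcases eq_or_lt_of_le ht.1 with h | h
    · rwa [← h]
    · exact hgt t ⟨h, ht.2⟩
  -- by contradiction
  by_contra hcon
  have hzero : volume {ξ | ξ ∈ Set.Icc (0 : ℝ) T ∧ ρ * (A / T) ≤ f ξ ∧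
      ρ * A ≤ ∫ x in (0 : ℝ)..ξ, f x} = 0 :=
    le_antisymm (not_lt.1 hcon) zero_le
  have hae : ∀ᵐ x, x ∉ {ξ | ξ ∈ Set.Icc (0 : ℝ) T ∧ ρ * (A / T) ≤ f ξ ∧
      ρ * A ≤ ∫ x in (0 : ℝ)..ξ, f x} := by
    rw [← measure_eq_zero_iff_ae_notMem] at *
    exact hzero
  -- on Icc t₀ T, f ≤ ρ(A/T) a.e.
  have hIcc' : MeasurableSet (Icc t₀ T) := measurableSet_Icc
  have hfle : ∀ᵐ x ∂(volume.restrict (Icc t₀ T)), f x ≤ ρ * (A / T) := by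
    filter_upwards [ae_restrict_mem hIcc', ae_restrict_of_ae hae] with x hx hnx
    by_contra h
    exact hnx ⟨⟨le_trans ht₀mem.1 hx.1, hx.2⟩, le_of_not_ge h, hge x hx⟩
  have hint_f' : IntegrableOn f (Icc t₀ T) :=
    hint_f.mono (Icc_subset_Icc ht₀mem.1 le_rfl) le_rfl
  have hintle : ∫ x in Icc t₀ T, f x ≤ ρ * (A / T) * (T - t₀) := by
    calc ∫ x in Icc t₀ T, f x ≤ ∫ _x in Icc t₀ T, ρ * (A / T) :=
          integral_mono_ae hint_f' (integrable_const _) hfle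
      _ = ρ * (A / T) * (T - t₀) := by
          rw [setIntegral_const, measureReal_def, Real.volume_Icc, smul_eq_mul,
            ENNReal.toReal_ofReal (by linarith)]
          ring
  have hii1 : IntervalIntegrable f volume 0 t₀ := by
    apply IntegrableOn.intervalIntegrable
    rw [uIcc_of_le ht₀mem.1]
    exact hint_f.mono (Icc_subset_Icc le_rfl ht₀mem.2) le_rfl
  have hii2 : IntervalIntegrable f volume t₀ T := by
    apply IntegrableOn.intervalIntegrable
    rw [uIcc_of_le ht₀T.le]
    exact hint_f'
  have hadd : F t₀ + ∫ x in t₀..T, f x = A := by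
    rw [hF]
    rw [intervalIntegral.integral_add_adjacent_intervals hii1 hii2]
    exact hint
  have heq : ∫ x in t₀..T, f x = ∫ x in Icc t₀ T, f x := by
    rw [intervalIntegral.integral_of_le ht₀T.le, integral_Icc_eq_integral_Ioc]
  have h1 : A - F t₀ ≤ ρ * (A / T) * (T - t₀) := by
    have := hintle
    rw [← heq] at this
    linarith
  have h2 : ρ * (A / T) * (T - t₀) ≤ ρ * A := by
    have h3 : 0 ≤ ρ * (A / T) := by positivity
    have : ρ * (A / T) * (T - t₀) ≤ ρ * (A / T) * T := by
      apply mul_le_mul_of_nonneg_left _ h3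
      linarith [ht₀mem.1]
    calc ρ * (A / T) * (T - t₀) ≤ ρ * (A / T) * T := this
      _ = ρ * A := by field_simp
  have hFle : F t₀ ≤ ρ * A := ht₀s.2
  nlinarith
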